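/- Let v : ℝ × ℝ → ℝ be a smooth function of (x,t) with v_xx(x,t) ≠ 0 for all (x,t), satisfying the evolution equation v_t = −v_x⁴/v_xx. Define η : ℝ × ℝ → ℝ by η = v_x⁶ v_xxx / v_xx³ − 3 v_x⁵ / v_xx. Then η satisfies the linearized equation ∂η/∂t = ( −4 v_x³/v_xx )·∂η/∂x + ( v_x⁴/v_xx² )·∂²η/∂x² at every point (x,t). -/

import Mathlib

/-!
Mixed partial derivatives of a smooth function commute, so along a solution the time
derivatives of `v_x`, `v_xx`, `v_xxx` are the first three x-derivatives of `-v_x⁴/v_xx`.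
These, and the x-derivatives of `η`, are rational functions of the x-jet `v_x, …, ∂ₓ⁵v`
whose denominators are powers of `v_xx`, so the linearized equation becomes a polynomial
identity in that jet once `v_xx⁵` is cleared.
-/

/-- Partial derivative with respect to the first (space) variable. -/
noncomputable def pdx (f : ℝ × ℝ → ℝ) : ℝ × ℝ → ℝ :=
  fun p => deriv (fun x => f (x, p.2)) p.1

/-- Partial derivative with respect to the second (time) variable. -/
noncomputable def pdt (f : ℝ × ℝ → ℝ) : ℝ × ℝ → ℝ :=
  fun p => deriv (fun t => f (p.1, t)) p.2

open scoped ContDiff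

section PartialDerivatives

variable {f : ℝ × ℝ → ℝ} {x t : ℝ}

theorem hasDerivAt_pdx (hf : DifferentiableAt ℝ f (x, t)) :
    HasDerivAt (fun x => f (x, t)) (pdx f (x, t)) x :=
  (hf.comp x (differentiableAt_id.prodMk (differentiableAt_const _))).hasDerivAt

theorem hasDerivAt_pdt (hf : DifferentiableAt ℝ f (x, t)) :
    HasDerivAt (fun t => f (x, t)) (pdt f (x, t)) t :=
  (hf.comp t ((differentiableAt_const _).prodMk differentiableAt_id)).hasDerivAt

theorem pdx_eq_fderiv (hf : DifferentiableAt ℝ f (x, t)) :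
    pdx f (x, t) = fderiv ℝ f (x, t) (1, 0) :=
  (hf.hasFDerivAt.comp_hasDerivAt x ((hasDerivAt_id x).prodMk (hasDerivAt_const x t))).deriv

theorem pdt_eq_fderiv (hf : DifferentiableAt ℝ f (x, t)) :
    pdt f (x, t) = fderiv ℝ f (x, t) (0, 1) :=
  (hf.hasFDerivAt.comp_hasDerivAt t ((hasDerivAt_const t x).prodMk (hasDerivAt_id t))).deriv

theorem ContDiff.pdx {m n : WithTop ℕ∞} (hf : ContDiff ℝ n f) (hmn : m + 1 ≤ n) :
    ContDiff ℝ m (_root_.pdx f) := by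
  have hd : Differentiable ℝ f :=
    (hf.of_le (le_add_self.trans hmn)).differentiable one_ne_zero
  rw [show _root_.pdx f = fun p => fderiv ℝ f p (1, 0) from funext fun p => pdx_eq_fderiv (hd p)]
  exact (hf.fderiv_right hmn).clm_apply contDiff_const

theorem pdt_pdx_comm (hf : ContDiff ℝ 2 f) (p : ℝ × ℝ) : pdt (pdx f) p = pdx (pdt f) p := by
  have hd : Differentiable ℝ f := hf.differentiable two_ne_zero
  have hd' : Differentiable ℝ (fderiv ℝ f) :=
    (hf.fderiv_right le_rfl).differentiable one_ne_zero
  have hx : pdx f = fun q => fderiv ℝ f q (1, 0) := funext fun q => pdx_eq_fderiv (hd q)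
  have ht : pdt f = fun q => fderiv ℝ f q (0, 1) := funext fun q => pdt_eq_fderiv (hd q)
  rw [hx, ht, pdt_eq_fderiv (by fun_prop), pdx_eq_fderiv (by fun_prop),
    fderiv_clm_apply (hd' p) (differentiableAt_const _),
    fderiv_clm_apply (hd' p) (differentiableAt_const _)]
  simpa using (hf.contDiffAt.isSymmSndFDerivAt (by simp)).eq (0, 1) (1, 0)

end PartialDerivatives

noncomputable def symmetryJet (a b c : ℝ) : ℝ := a ^ 6 * c / b ^ 3 - 3 * a ^ 5 / b

noncomputable def thirdOrderSymmetry (v : ℝ × ℝ → ℝ) : ℝ × ℝ → ℝ :=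
  fun p => symmetryJet (pdx v p) (pdx (pdx v) p) (pdx (pdx (pdx v)) p)

theorem HasDerivAt.symmetryJet {A B C : ℝ → ℝ} {A' B' C' s : ℝ} (hA : HasDerivAt A A' s)
    (hB : HasDerivAt B B' s) (hC : HasDerivAt C C' s) (hB0 : B s ≠ 0) :
    HasDerivAt (fun s => _root_.symmetryJet (A s) (B s) (C s))
      ((6 * A s ^ 5 * A' * C s + A s ^ 6 * C') / B s ^ 3 - 3 * A s ^ 6 * C s * B' / B s ^ 4
        - 3 * (5 * A s ^ 4 * A' * B s - A s ^ 5 * B') / B s ^ 2) s :=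
  ((((hA.fun_pow 6).fun_mul hC).fun_div (hB.fun_pow 3) (pow_ne_zero 3 hB0)).fun_sub
    (((hA.fun_pow 5).const_mul 3).fun_div hB hB0)).congr_deriv (by field_simp; ring)

section Solution

variable {v : ℝ × ℝ → ℝ}

theorem pdt_pdx_of_pdt_eq (hv : ContDiff ℝ ∞ v) (hvxx : ∀ p, pdx (pdx v) p ≠ 0)
    (heq : ∀ p, pdt v p = -(pdx v p) ^ 4 / pdx (pdx v) p) :
    pdt (pdx v) = fun p => (pdx v p ^ 4 * pdx (pdx (pdx v)) p
      - 4 * pdx v p ^ 3 * pdx (pdx v) p ^ 2) / pdx (pdx v) p ^ 2 := by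
  have hv₁ : ContDiff ℝ ∞ (pdx v) := hv.pdx (by simp)
  have hv₂ : ContDiff ℝ ∞ (pdx (pdx v)) := hv₁.pdx (by simp)
  funext ⟨x, t⟩
  have ha := hasDerivAt_pdx (hv₁.differentiable (by simp) (x, t))
  have hb := hasDerivAt_pdx (hv₂.differentiable (by simp) (x, t))
  rw [pdt_pdx_comm (hv.of_le (WithTop.coe_le_coe.2 le_top)), funext heq]
  exact (((ha.fun_pow 4).fun_neg.fun_div hb (hvxx _)).congr_deriv (by
    field_simp [hvxx (x, t)]
    ring)).deriv

theorem pdt_pdx_pdx_of_pdt_eq (hv : ContDiff ℝ ∞ v) (hvxx : ∀ p, pdx (pdx v) p ≠ 0)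
    (heq : ∀ p, pdt v p = -(pdx v p) ^ 4 / pdx (pdx v) p) :
    pdt (pdx (pdx v)) = fun p => (pdx v p ^ 4 * pdx (pdx v) p * pdx (pdx (pdx (pdx v))) p
      + 4 * pdx v p ^ 3 * pdx (pdx v) p ^ 2 * pdx (pdx (pdx v)) p
      - 12 * pdx v p ^ 2 * pdx (pdx v) p ^ 4
      - 2 * pdx v p ^ 4 * pdx (pdx (pdx v)) p ^ 2) / pdx (pdx v) p ^ 3 := by
  have hv₁ : ContDiff ℝ ∞ (pdx v) := hv.pdx (by simp)
  have hv₂ : ContDiff ℝ ∞ (pdx (pdx v)) := hv₁.pdx (by simp)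
  have hv₃ : ContDiff ℝ ∞ (pdx (pdx (pdx v))) := hv₂.pdx (by simp)
  funext ⟨x, t⟩
  have ha := hasDerivAt_pdx (hv₁.differentiable (by simp) (x, t))
  have hb := hasDerivAt_pdx (hv₂.differentiable (by simp) (x, t))
  have hc := hasDerivAt_pdx (hv₃.differentiable (by simp) (x, t))
  rw [pdt_pdx_comm (hv₁.of_le (WithTop.coe_le_coe.2 le_top)), pdt_pdx_of_pdt_eq hv hvxx heq]
  exact (((((ha.fun_pow 4).fun_mul hc).fun_sub (((ha.fun_pow 3).const_mul 4).fun_mul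
    (hb.fun_pow 2))).fun_div (hb.fun_pow 2) (pow_ne_zero 2 (hvxx _))).congr_deriv (by
      field_simp [hvxx (x, t)]
      ring)).deriv

theorem pdt_pdx_pdx_pdx_of_pdt_eq (hv : ContDiff ℝ ∞ v) (hvxx : ∀ p, pdx (pdx v) p ≠ 0)
    (heq : ∀ p, pdt v p = -(pdx v p) ^ 4 / pdx (pdx v) p) :
    pdt (pdx (pdx (pdx v))) = fun p =>
      (8 * pdx v p ^ 3 * pdx (pdx v) p ^ 3 * pdx (pdx (pdx (pdx v))) p
        - 6 * pdx v p ^ 4 * pdx (pdx v) p * pdx (pdx (pdx v)) p * pdx (pdx (pdx (pdx v))) p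
        + pdx v p ^ 4 * pdx (pdx v) p ^ 2 * pdx (pdx (pdx (pdx (pdx v)))) p
        - 24 * pdx v p * pdx (pdx v) p ^ 6
        - 12 * pdx v p ^ 3 * pdx (pdx v) p ^ 2 * pdx (pdx (pdx v)) p ^ 2
        + 6 * pdx v p ^ 4 * pdx (pdx (pdx v)) p ^ 3) / pdx (pdx v) p ^ 4 := by
  have hv₁ : ContDiff ℝ ∞ (pdx v) := hv.pdx (by simp)
  have hv₂ : ContDiff ℝ ∞ (pdx (pdx v)) := hv₁.pdx (by simp)
  have hv₃ : ContDiff ℝ ∞ (pdx (pdx (pdx v))) := hv₂.pdx (by simp)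
  have hv₄ : ContDiff ℝ ∞ (pdx (pdx (pdx (pdx v)))) := hv₃.pdx (by simp)
  funext ⟨x, t⟩
  have ha := hasDerivAt_pdx (hv₁.differentiable (by simp) (x, t))
  have hb := hasDerivAt_pdx (hv₂.differentiable (by simp) (x, t))
  have hc := hasDerivAt_pdx (hv₃.differentiable (by simp) (x, t))
  have hd := hasDerivAt_pdx (hv₄.differentiable (by simp) (x, t))
  rw [pdt_pdx_comm (hv₂.of_le (WithTop.coe_le_coe.2 le_top)), pdt_pdx_pdx_of_pdt_eq hv hvxx heq]
  exact ((((((((ha.fun_pow 4).fun_mul hb).fun_mul hd).fun_add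
    ((((ha.fun_pow 3).const_mul 4).fun_mul (hb.fun_pow 2)).fun_mul hc)).fun_sub
    (((ha.fun_pow 2).const_mul 12).fun_mul (hb.fun_pow 4))).fun_sub
    (((ha.fun_pow 4).const_mul 2).fun_mul (hc.fun_pow 2))).fun_div
    (hb.fun_pow 3) (pow_ne_zero 3 (hvxx _))).congr_deriv (by
      field_simp [hvxx (x, t)]
      ring)).deriv

theorem pdx_thirdOrderSymmetry (hv : ContDiff ℝ ∞ v) (hvxx : ∀ p, pdx (pdx v) p ≠ 0) :
    pdx (thirdOrderSymmetry v) = fun p =>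
      (9 * pdx v p ^ 5 * pdx (pdx v) p ^ 2 * pdx (pdx (pdx v)) p
        + pdx v p ^ 6 * pdx (pdx v) p * pdx (pdx (pdx (pdx v))) p
        - 3 * pdx v p ^ 6 * pdx (pdx (pdx v)) p ^ 2
        - 15 * pdx v p ^ 4 * pdx (pdx v) p ^ 4) / pdx (pdx v) p ^ 4 := by
  have hv₁ : ContDiff ℝ ∞ (pdx v) := hv.pdx (by simp)
  have hv₂ : ContDiff ℝ ∞ (pdx (pdx v)) := hv₁.pdx (by simp)
  have hv₃ : ContDiff ℝ ∞ (pdx (pdx (pdx v))) := hv₂.pdx (by simp)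
  funext ⟨x, t⟩
  have ha := hasDerivAt_pdx (hv₁.differentiable (by simp) (x, t))
  have hb := hasDerivAt_pdx (hv₂.differentiable (by simp) (x, t))
  have hc := hasDerivAt_pdx (hv₃.differentiable (by simp) (x, t))
  exact ((ha.symmetryJet hb hc (hvxx _)).congr_deriv (by
    field_simp [hvxx (x, t)]
    ring)).deriv

theorem pdx_pdx_thirdOrderSymmetry (hv : ContDiff ℝ ∞ v) (hvxx : ∀ p, pdx (pdx v) p ≠ 0) :
    pdx (pdx (thirdOrderSymmetry v)) = fun p =>
      (45 * pdx v p ^ 4 * pdx (pdx v) p ^ 4 * pdx (pdx (pdx v)) p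
        + 15 * pdx v p ^ 5 * pdx (pdx v) p ^ 3 * pdx (pdx (pdx (pdx v))) p
        - 9 * pdx v p ^ 6 * pdx (pdx v) p * pdx (pdx (pdx v)) p * pdx (pdx (pdx (pdx v))) p
        + pdx v p ^ 6 * pdx (pdx v) p ^ 2 * pdx (pdx (pdx (pdx (pdx v)))) p
        - 60 * pdx v p ^ 3 * pdx (pdx v) p ^ 6
        - 36 * pdx v p ^ 5 * pdx (pdx v) p ^ 2 * pdx (pdx (pdx v)) p ^ 2
        + 12 * pdx v p ^ 6 * pdx (pdx (pdx v)) p ^ 3) / pdx (pdx v) p ^ 5 := by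
  have hv₁ : ContDiff ℝ ∞ (pdx v) := hv.pdx (by simp)
  have hv₂ : ContDiff ℝ ∞ (pdx (pdx v)) := hv₁.pdx (by simp)
  have hv₃ : ContDiff ℝ ∞ (pdx (pdx (pdx v))) := hv₂.pdx (by simp)
  have hv₄ : ContDiff ℝ ∞ (pdx (pdx (pdx (pdx v)))) := hv₃.pdx (by simp)
  funext ⟨x, t⟩
  have ha := hasDerivAt_pdx (hv₁.differentiable (by simp) (x, t))
  have hb := hasDerivAt_pdx (hv₂.differentiable (by simp) (x, t))
  have hc := hasDerivAt_pdx (hv₃.differentiable (by simp) (x, t))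
  have hd := hasDerivAt_pdx (hv₄.differentiable (by simp) (x, t))
  rw [pdx_thirdOrderSymmetry hv hvxx]
  exact (((((((((ha.fun_pow 5).const_mul 9).fun_mul (hb.fun_pow 2)).fun_mul hc).fun_add
    (((ha.fun_pow 6).fun_mul hb).fun_mul hd)).fun_sub
    (((ha.fun_pow 6).const_mul 3).fun_mul (hc.fun_pow 2))).fun_sub
    (((ha.fun_pow 4).const_mul 15).fun_mul (hb.fun_pow 4))).fun_div
    (hb.fun_pow 4) (pow_ne_zero 4 (hvxx _))).congr_deriv (by
      field_simp [hvxx (x, t)]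
      ring)).deriv

end Solution

/-- Subcase 1.2: for a solution of `v_t = −v_x⁴/v_xx`, the function
`η = v_x⁶ v_xxx / v_xx³ − 3 v_x⁵ / v_xx` satisfies the linearized
(Lie–Bäcklund symmetry) equation. -/
theorem subcase12_third_order_symmetry
    (v : ℝ × ℝ → ℝ) (hv : ContDiff ℝ (⊤ : ℕ∞) v)
    (hvxx : ∀ p : ℝ × ℝ, pdx (pdx v) p ≠ 0)
    (heq : ∀ p : ℝ × ℝ, pdt v p = -(pdx v p) ^ 4 / pdx (pdx v) p)
    (η : ℝ × ℝ → ℝ)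
    (hη : η = fun p =>
      (pdx v p) ^ 6 * pdx (pdx (pdx v)) p / (pdx (pdx v) p) ^ 3
        - 3 * (pdx v p) ^ 5 / pdx (pdx v) p) :
    ∀ p : ℝ × ℝ, pdt η p =
      (-4 * (pdx v p) ^ 3 / pdx (pdx v) p) * pdx η p
      + ((pdx v p) ^ 4 / (pdx (pdx v) p) ^ 2) * pdx (pdx η) p := by
  obtain rfl : η = thirdOrderSymmetry v := hη
  have hv₁ : ContDiff ℝ ∞ (pdx v) := hv.pdx (by simp)
  have hv₂ : ContDiff ℝ ∞ (pdx (pdx v)) := hv₁.pdx (by simp)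
  have hv₃ : ContDiff ℝ ∞ (pdx (pdx (pdx v))) := hv₂.pdx (by simp)
  rintro ⟨x, t⟩
  have ha := hasDerivAt_pdt (hv₁.differentiable (by simp) (x, t))
  have hb := hasDerivAt_pdt (hv₂.differentiable (by simp) (x, t))
  have hc := hasDerivAt_pdt (hv₃.differentiable (by simp) (x, t))
  rw [pdt_pdx_of_pdt_eq hv hvxx heq] at ha
  rw [pdt_pdx_pdx_of_pdt_eq hv hvxx heq] at hb
  rw [pdt_pdx_pdx_pdx_of_pdt_eq hv hvxx heq] at hc
  rw [pdx_pdx_thirdOrderSymmetry hv hvxx, pdx_thirdOrderSymmetry hv hvxx]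
  exact ((ha.symmetryJet hb hc (hvxx _)).congr_deriv (by
    field_simp [hvxx (x, t)]
    ring)).deriv
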